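/- Let R be a Noetherian local ring, I an ideal such that the initial form x* of x ∈ I \ I² is a regular element of the associated graded ring G_I(R). Then for every n ≥ 1 there is an exact sequence 0 → R/I^n →^{·x} R/I^{n+1} → R'/I'^{n+1} → 0, where R' = R/(x), I' = I/(x), and the first map is multiplication by x. -/

import Mathlib

/-!
Regularity of `x*` on `G_I(R)` lets one climb from `x * r ∈ I^(n+1)` to `r ∈ I^n` one power
at a time, i.e. `(I^(n+1) : x) = I^n`, which is injectivity of multiplication by `x`.
Exactness in the middle holds for any ideals `J`, `K` with `x J ⊆ K`: both the image of
`· x : R/J → R/K` and the kernel of `R/K → R/(K + (x))` are the image of `(x)` in `R/K`.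
-/

namespace Ideal

theorem mem_pow_of_mul_mem_pow_succ {R : Type*} [CommSemiring R] {I : Ideal R} {x : R}
    (hreg : ∀ (n : ℕ) (r : R), r ∈ I ^ n → x * r ∈ I ^ (n + 2) → r ∈ I ^ (n + 1))
    {n : ℕ} {r : R} (hr : x * r ∈ I ^ (n + 1)) : r ∈ I ^ n := by
  suffices ∀ k ≤ n, r ∈ I ^ k from this n le_rfl
  intro k hk
  induction k with
  | zero => simp
  | succ k ih => exact hreg k r (ih (by omega)) (pow_le_pow_right (by omega) hr)

theorem mul_mem_pow_succ {R : Type*} [CommSemiring R] {I : Ideal R} {x : R} (hx : x ∈ I)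
    {n : ℕ} {r : R} (hr : r ∈ I ^ n) : x * r ∈ I ^ (n + 1) :=
  pow_succ' I n ▸ mul_mem_mul hx hr

section

variable {R : Type*} [CommRing R] {J K : Ideal R} {x : R}

theorem range_lsmul_eq_span_singleton (x : R) :
    LinearMap.range (LinearMap.lsmul R R x) = span {x} := by
  ext r
  simp [mem_span_singleton', mul_comm, eq_comm]

theorem range_mapQ_lsmul (h : J ≤ Submodule.comap (LinearMap.lsmul R R x) K) :
    LinearMap.range (J.mapQ K (LinearMap.lsmul R R x) h) =
      LinearMap.ker (Submodule.factor (le_sup_left : K ≤ K ⊔ span {x})) := by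
  rw [Submodule.range_mapQ, Submodule.ker_mapQ, Submodule.comap_id, Submodule.map_sup,
    Submodule.mkQ_map_self, bot_sup_eq, range_lsmul_eq_span_singleton]

theorem injective_mapQ_lsmul (h : J ≤ Submodule.comap (LinearMap.lsmul R R x) K)
    (hK : ∀ r, x * r ∈ K → r ∈ J) :
    Function.Injective (J.mapQ K (LinearMap.lsmul R R x) h) := by
  rw [← LinearMap.ker_eq_bot, Submodule.ker_mapQ, le_antisymm hK h,
    Submodule.mkQ_map_self]

end

end Ideal

open Ideal in
theorem dual_hilbert_samuel_stmt_11_general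
    (R : Type) [CommRing R]
    (I : Ideal R) (x : R) (hx : x ∈ I)
    (hreg : ∀ (n : ℕ) (r : R), r ∈ I ^ n → x * r ∈ I ^ (n + 2) → r ∈ I ^ (n + 1)) :
    ∀ n : ℕ, 1 ≤ n →
      ∃ (f : (R ⧸ (I ^ n : Ideal R)) →ₗ[R] R ⧸ (I ^ (n + 1) : Ideal R))
        (g : (R ⧸ (I ^ (n + 1) : Ideal R)) →ₗ[R]
          R ⧸ (I ^ (n + 1) ⊔ Ideal.span {x} : Ideal R)),
        (∀ r : R, f (Submodule.Quotient.mk r) = Submodule.Quotient.mk (x * r)) ∧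
        (∀ r : R, g (Submodule.Quotient.mk r) = Submodule.Quotient.mk r) ∧
        Function.Injective f ∧ Function.Surjective g ∧
        LinearMap.range f = LinearMap.ker g := by
  intro n _
  have hmul : I ^ n ≤ Submodule.comap (LinearMap.lsmul R R x) (I ^ (n + 1)) :=
    fun _ hr ↦ mul_mem_pow_succ hx hr
  exact ⟨_, _, fun _ ↦ rfl, fun _ ↦ rfl,
    injective_mapQ_lsmul hmul fun _ ↦ mem_pow_of_mul_mem_pow_succ hreg,
    Submodule.factor_surjective _, range_mapQ_lsmul hmul⟩

theorem dual_hilbert_samuel_stmt_11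
    (R : Type) [CommRing R] [IsLocalRing R] [IsNoetherianRing R]
    (I : Ideal R) (x : R) (hx : x ∈ I) (hx2 : x ∉ I ^ 2)
    (hreg : ∀ (n : ℕ) (r : R), r ∈ I ^ n → x * r ∈ I ^ (n + 2) → r ∈ I ^ (n + 1)) :
    ∀ n : ℕ, 1 ≤ n →
      ∃ (f : (R ⧸ (I ^ n : Ideal R)) →ₗ[R] R ⧸ (I ^ (n + 1) : Ideal R))
        (g : (R ⧸ (I ^ (n + 1) : Ideal R)) →ₗ[R]
          R ⧸ (I ^ (n + 1) ⊔ Ideal.span {x} : Ideal R)),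
        (∀ r : R, f (Submodule.Quotient.mk r) = Submodule.Quotient.mk (x * r)) ∧
        (∀ r : R, g (Submodule.Quotient.mk r) = Submodule.Quotient.mk r) ∧
        Function.Injective f ∧ Function.Surjective g ∧
        LinearMap.range f = LinearMap.ker g :=
  dual_hilbert_samuel_stmt_11_general R I x hx hreg
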